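/- Let f, g : {0,1}^n → ℝ be increasing. If f and g are both supermodular, or both submodular, then E[fg] − E[f]E[g] ≥ (1/4)·∑_{i=1}^n Inf_i^{(1)}[f]·Inf_i^{(1)}[g], where Inf_i^{(1)}[h] = E[|∂_i h|] is the L^1-influence of coordinate i. -/
import Mathlib


open Finset MeasureTheory

/-- Expectation with respect to the uniform measure on `{0,1}^n`. -/
noncomputable def Ev (n : ℕ) (f : (Fin n → Bool) → ℝ) : ℝ :=
  (∑ x : Fin n → Bool, f x) / 2 ^ n

/-- `f` is increasing (monotone w.r.t. the coordinatewise order). -/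
def Increasing' (n : ℕ) (f : (Fin n → Bool) → ℝ) : Prop :=
  ∀ x y : Fin n → Bool, (∀ i, x i ≤ y i) → f x ≤ f y

/-- `f` is submodular: `f(x∧y) + f(x∨y) ≤ f(x) + f(y)`. -/
def Submodular' (n : ℕ) (f : (Fin n → Bool) → ℝ) : Prop :=
  ∀ x y : Fin n → Bool,
    f (fun i => x i && y i) + f (fun i => x i || y i) ≤ f x + f y

/-- `f` is supermodular: `f(x) + f(y) ≤ f(x∧y) + f(x∨y)`. -/
def Supermodular' (n : ℕ) (f : (Fin n → Bool) → ℝ) : Prop :=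
  ∀ x y : Fin n → Bool,
    f x + f y ≤ f (fun i => x i && y i) + f (fun i => x i || y i)

/-- Discrete derivative `∂_i f (x) = f(x^{(i→1)}) - f(x^{(i→0)})`. -/
noncomputable def pD (n : ℕ) (i : Fin n) (f : (Fin n → Bool) → ℝ) :
    (Fin n → Bool) → ℝ :=
  fun x => f (Function.update x i true) - f (Function.update x i false)

/-- Character `χ_S(x) = (-1)^{∑_{i ∈ S} x_i}`. -/
noncomputable def chi (n : ℕ) (S : Finset (Fin n)) (x : Fin n → Bool) : ℝ :=
  ∏ i ∈ S, (if x i then (-1 : ℝ) else 1)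

/-- Fourier--Walsh coefficient `f̂(S) = E[f · χ_S]`. -/
noncomputable def fhat (n : ℕ) (f : (Fin n → Bool) → ℝ) (S : Finset (Fin n)) : ℝ :=
  Ev n (fun x => f x * chi n S x)

/-- Heat semigroup `P_t f = ∑_S e^{-t|S|} f̂(S) χ_S`. -/
noncomputable def heat (n : ℕ) (t : ℝ) (f : (Fin n → Bool) → ℝ) :
    (Fin n → Bool) → ℝ :=
  fun x => ∑ S : Finset (Fin n), Real.exp (-(t * S.card)) * fhat n f S * chi n S x

/-- Influence of coordinate `i` on a Boolean (`{0,1}`-valued) function: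
`Inf_i[f] = P[f(x) ≠ f(x ⊕ e_i)]`. -/
noncomputable def InfB (n : ℕ) (i : Fin n) (f : (Fin n → Bool) → ℝ) : ℝ :=
  Ev n (fun x => if f x = f (Function.update x i (! x i)) then 0 else 1)

/-- `L¹`-influence `Inf_i^{(1)}[f] = E[|∂_i f|]`. -/
noncomputable def Inf1 (n : ℕ) (i : Fin n) (f : (Fin n → Bool) → ℝ) : ℝ :=
  Ev n (fun x => |pD n i f x|)

/-- `L²`-influence `Inf_i[f] = E[|∂_i f|²]` for real-valued `f`. -/
noncomputable def Inf2 (n : ℕ) (i : Fin n) (f : (Fin n → Bool) → ℝ) : ℝ :=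
  Ev n (fun x => |pD n i f x| ^ 2)

/-- Difference operator `D_i f (x) = f(x) - f(x ⊕ e_i)`. -/
noncomputable def Dop (n : ℕ) (i : Fin n) (f : (Fin n → Bool) → ℝ) :
    (Fin n → Bool) → ℝ :=
  fun x => f x - f (Function.update x i (! x i))

/-- `‖f‖_p = (E[|f|^p])^{1/p}` (also used as a quasi-norm for `0 < p < 1`). -/
noncomputable def nrm (n : ℕ) (p : ℝ) (f : (Fin n → Bool) → ℝ) : ℝ :=
  (Ev n (fun x => |f x| ^ p)) ^ (1 / p)

/-- Iterated discrete derivative along a list of coordinates. -/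
noncomputable def pDList (n : ℕ) : List (Fin n) → ((Fin n → Bool) → ℝ) → ((Fin n → Bool) → ℝ)
  | [], f => f
  | i :: l, f => pD n i (pDList n l f)

/-- `∂_T f = ∂_{i₁} ∘ ⋯ ∘ ∂_{i_d} f` for `T = {i₁ < ⋯ < i_d}` (the order is immaterial
since discrete derivatives along distinct coordinates commute). -/
noncomputable def pDT (n : ℕ) (T : Finset (Fin n)) (f : (Fin n → Bool) → ℝ) :
    (Fin n → Bool) → ℝ :=
  pDList n (T.sort (· ≤ ·)) f

/-! ### Auxiliary lemmas -/

noncomputable def res (n : ℕ) (f : (Fin (n+1) → Bool) → ℝ) (b : Bool) :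
    (Fin n → Bool) → ℝ := fun y => f (Fin.cons b y)

lemma Ev_succ (n : ℕ) (f : (Fin (n+1) → Bool) → ℝ) :
    Ev (n+1) f = (Ev n (res n f false) + Ev n (res n f true)) / 2 := by
  unfold Ev res
  rw [← Equiv.sum_comp (Fin.consEquiv (fun _ => Bool)) f, Fintype.sum_prod_type,
    Fintype.sum_bool]
  simp [Fin.consEquiv]
  ring

lemma Ev_mono (n : ℕ) (a b : (Fin n → Bool) → ℝ) (h : ∀ x, a x ≤ b x) :
    Ev n a ≤ Ev n b := by
  unfold Ev
  gcongr
  exact h _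

lemma Ev_sub (n : ℕ) (a b : (Fin n → Bool) → ℝ) :
    Ev n (fun x => a x - b x) = Ev n a - Ev n b := by
  unfold Ev
  rw [Finset.sum_sub_distrib, sub_div]

-- restriction preserves structure
lemma res_incr (n : ℕ) (f : (Fin (n+1) → Bool) → ℝ) (hf : Increasing' (n+1) f) (b : Bool) :
    Increasing' n (res n f b) := by
  intro x y hxy
  apply hf
  intro i
  refine Fin.cases ?_ ?_ i <;> simp [hxy]

lemma cons_and (n : ℕ) (b c : Bool) (u v : Fin n → Bool) :
    (fun i => (Fin.cons b u : Fin (n+1) → Bool) i && (Fin.cons c v : Fin (n+1) → Bool) i)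
      = Fin.cons (b && c) (fun i => u i && v i) := by
  funext i
  refine Fin.cases ?_ ?_ i <;> simp

lemma cons_or (n : ℕ) (b c : Bool) (u v : Fin n → Bool) :
    (fun i => (Fin.cons b u : Fin (n+1) → Bool) i || (Fin.cons c v : Fin (n+1) → Bool) i)
      = Fin.cons (b || c) (fun i => u i || v i) := by
  funext i
  refine Fin.cases ?_ ?_ i <;> simp

lemma res_super (n : ℕ) (f : (Fin (n+1) → Bool) → ℝ) (hf : Supermodular' (n+1) f) (b : Bool) :
    Supermodular' n (res n f b) := by
  intro x y
  have := hf (Fin.cons b x) (Fin.cons b y)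
  rwa [cons_and, cons_or, Bool.and_self, Bool.or_self] at this

lemma res_sub (n : ℕ) (f : (Fin (n+1) → Bool) → ℝ) (hf : Submodular' (n+1) f) (b : Bool) :
    Submodular' n (res n f b) := by
  intro x y
  have := hf (Fin.cons b x) (Fin.cons b y)
  rwa [cons_and, cons_or, Bool.and_self, Bool.or_self] at this

-- derivatives of restrictions
lemma res_pD_succ (n : ℕ) (f : (Fin (n+1) → Bool) → ℝ) (i : Fin n) (b : Bool) :
    res n (pD (n+1) i.succ f) b = pD n i (res n f b) := by
  funext y
  simp only [res, pD, ← Fin.cons_update]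

lemma res_pD_zero (n : ℕ) (f : (Fin (n+1) → Bool) → ℝ) (b : Bool) :
    res n (pD (n+1) 0 f) b = fun y => res n f true y - res n f false y := by
  funext y
  simp only [res, pD, Fin.update_cons_zero]

lemma Ev_pD_succ (n : ℕ) (f : (Fin (n+1) → Bool) → ℝ) (i : Fin n) :
    Ev (n+1) (pD (n+1) i.succ f)
      = (Ev n (pD n i (res n f false)) + Ev n (pD n i (res n f true))) / 2 := by
  rw [Ev_succ, res_pD_succ, res_pD_succ]

lemma Ev_pD_zero (n : ℕ) (f : (Fin (n+1) → Bool) → ℝ) :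
    Ev (n+1) (pD (n+1) 0 f) = Ev n (res n f true) - Ev n (res n f false) := by
  rw [Ev_succ, res_pD_zero, res_pD_zero, Ev_sub]
  ring

-- the sign lemma
lemma update_le (n : ℕ) (y : Fin n → Bool) (i j : Fin n) :
    Function.update y i false j ≤ Function.update y i true j := by
  rcases eq_or_ne j i with h | h <;> simp [Function.update, h]

lemma sign_super (n : ℕ) (f : (Fin (n+1) → Bool) → ℝ) (hf : Supermodular' (n+1) f)
    (i : Fin n) :
    Ev n (pD n i (res n f false)) ≤ Ev n (pD n i (res n f true)) := by
  apply Ev_mono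
  intro y
  set u0 := Function.update y i false
  set u1 := Function.update y i true
  have key := hf (Fin.cons true u0) (Fin.cons false u1)
  rw [cons_and, cons_or] at key
  have h1 : (fun j => u0 j && u1 j) = u0 := by
    funext j
    rcases eq_or_ne j i with h | h <;> simp [u0, u1, Function.update, h]
  have h2 : (fun j => u0 j || u1 j) = u1 := by
    funext j
    rcases eq_or_ne j i with h | h <;> simp [u0, u1, Function.update, h]
  rw [h1, h2] at key
  simp only [Bool.true_and, Bool.true_or] at key
  simp only [pD, res]
  linarith

lemma sign_sub (n : ℕ) (f : (Fin (n+1) → Bool) → ℝ) (hf : Submodular' (n+1) f)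
    (i : Fin n) :
    Ev n (pD n i (res n f true)) ≤ Ev n (pD n i (res n f false)) := by
  apply Ev_mono
  intro y
  set u0 := Function.update y i false
  set u1 := Function.update y i true
  have key := hf (Fin.cons true u0) (Fin.cons false u1)
  rw [cons_and, cons_or] at key
  have h1 : (fun j => u0 j && u1 j) = u0 := by
    funext j
    rcases eq_or_ne j i with h | h <;> simp [u0, u1, Function.update, h]
  have h2 : (fun j => u0 j || u1 j) = u1 := by
    funext j
    rcases eq_or_ne j i with h | h <;> simp [u0, u1, Function.update, h]
  rw [h1, h2] at key
  simp only [Bool.true_and, Bool.true_or] at key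
  simp only [pD, res]
  linarith

-- main inductive inequality, stated with E[∂f] instead of Inf1
theorem key_ineq (n : ℕ) (f g : (Fin n → Bool) → ℝ)
    (hf : Increasing' n f) (hg : Increasing' n g)
    (hmod : (Supermodular' n f ∧ Supermodular' n g) ∨
            (Submodular' n f ∧ Submodular' n g)) :
    (1 / 4) * ∑ i : Fin n, Ev n (pD n i f) * Ev n (pD n i g) ≤
      Ev n (fun x => f x * g x) - Ev n f * Ev n g := by
  induction n with
  | zero =>
    have hone : ∀ (h : (Fin 0 → Bool) → ℝ), Ev 0 h = h (fun i => i.elim0) := by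
      intro h
      unfold Ev
      rw [Fintype.sum_subsingleton _ (fun (i : Fin 0) => i.elim0)]
      simp
    simp [hone]
  | succ n ih =>
    -- restrictions
    set f0 := res n f false with hf0
    set f1 := res n f true with hf1
    set g0 := res n g false with hg0
    set g1 := res n g true with hg1
    have hresf : ∀ b, res n (fun x => f x * g x) b = fun y => res n f b y * res n g b y := by
      intro b; funext y; rfl
    have hmod0 : (Supermodular' n f0 ∧ Supermodular' n g0) ∨
        (Submodular' n f0 ∧ Submodular' n g0) := by
      rcases hmod with ⟨h1, h2⟩ | ⟨h1, h2⟩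
      · exact Or.inl ⟨res_super n f h1 false, res_super n g h2 false⟩
      · exact Or.inr ⟨res_sub n f h1 false, res_sub n g h2 false⟩
    have hmod1 : (Supermodular' n f1 ∧ Supermodular' n g1) ∨
        (Submodular' n f1 ∧ Submodular' n g1) := by
      rcases hmod with ⟨h1, h2⟩ | ⟨h1, h2⟩
      · exact Or.inl ⟨res_super n f h1 true, res_super n g h2 true⟩
      · exact Or.inr ⟨res_sub n f h1 true, res_sub n g h2 true⟩
    have ih0 := ih f0 g0 (res_incr n f hf false) (res_incr n g hg false) hmod0
    have ih1 := ih f1 g1 (res_incr n f hf true) (res_incr n g hg true) hmod1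
    -- cross-term sign
    have hsign : ∀ i : Fin n,
        0 ≤ (Ev n (pD n i f1) - Ev n (pD n i f0)) * (Ev n (pD n i g1) - Ev n (pD n i g0)) := by
      intro i
      rcases hmod with ⟨h1, h2⟩ | ⟨h1, h2⟩
      · nlinarith [sign_super n f h1 i, sign_super n g h2 i]
      · nlinarith [sign_sub n f h1 i, sign_sub n g h2 i]
    -- termwise bound for the tail sum
    have htail : ∑ i : Fin n,
          Ev (n+1) (pD (n+1) i.succ f) * Ev (n+1) (pD (n+1) i.succ g)
        ≤ ∑ i : Fin n, ((Ev n (pD n i f0) * Ev n (pD n i g0)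
            + Ev n (pD n i f1) * Ev n (pD n i g1)) / 2) := by
      apply Finset.sum_le_sum
      intro i _
      rw [Ev_pD_succ, Ev_pD_succ]
      have := hsign i
      nlinarith [hsign i]
    -- expand means
    rw [Fin.sum_univ_succ, Ev_succ n f, Ev_succ n g, Ev_succ n (fun x => f x * g x),
      Ev_pD_zero, Ev_pD_zero]
    rw [hresf, hresf]
    simp only [← hf0, ← hf1, ← hg0, ← hg1] at *
    have expand : ∑ i : Fin n, ((Ev n (pD n i f0) * Ev n (pD n i g0)
            + Ev n (pD n i f1) * Ev n (pD n i g1)) / 2)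
        = (∑ i : Fin n, Ev n (pD n i f0) * Ev n (pD n i g0)) / 2
          + (∑ i : Fin n, Ev n (pD n i f1) * Ev n (pD n i g1)) / 2 := by
      rw [← Finset.sum_div, Finset.sum_add_distrib, add_div]
    set Ff := Ev n f0
    set Tf := Ev n f1
    set Fg := Ev n g0
    set Tg := Ev n g1
    have step1 : (1/4:ℝ) * ∑ i : Fin n,
          Ev (n+1) (pD (n+1) i.succ f) * Ev (n+1) (pD (n+1) i.succ g)
        ≤ (1/2) * (((Ev n fun x => f0 x * g0 x) - Ff * Fg)
            + ((Ev n fun x => f1 x * g1 x) - Tf * Tg)) := by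
      rw [expand] at htail
      linarith [htail, ih0, ih1]
    have identity : ((Ev n fun x => f0 x * g0 x) + (Ev n fun x => f1 x * g1 x)) / 2
          - (Ff + Tf) / 2 * ((Fg + Tg) / 2)
        = (1/2) * (((Ev n fun x => f0 x * g0 x) - Ff * Fg)
            + ((Ev n fun x => f1 x * g1 x) - Tf * Tg))
          + (1/4) * ((Tf - Ff) * (Tg - Fg)) := by ring
    rw [identity]
    nlinarith [step1]

/-- For increasing `f, g : {0,1}^n → ℝ` both supermodular or both
submodular, `E[fg] − E[f]E[g] ≥ (1/4) ∑_i Inf_i^{(1)}[f]·Inf_i^{(1)}[g]`. -/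
theorem dream_inequality_L1 (n : ℕ) (f g : (Fin n → Bool) → ℝ)
    (hf : Increasing' n f) (hg : Increasing' n g)
    (hmod : (Supermodular' n f ∧ Supermodular' n g) ∨
            (Submodular' n f ∧ Submodular' n g)) :
    Ev n (fun x => f x * g x) - Ev n f * Ev n g ≥
      (1 / 4) * ∑ i : Fin n, Inf1 n i f * Inf1 n i g := by
  have habs : ∀ (h : (Fin n → Bool) → ℝ), Increasing' n h → ∀ i,
      Inf1 n i h = Ev n (pD n i h) := by
    intro h hh i
    unfold Inf1
    congr 1
    funext x
    rw [abs_of_nonneg]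
    unfold pD
    have : h (Function.update x i false) ≤ h (Function.update x i true) :=
      hh _ _ (update_le n x i)
    linarith
  have : ∀ i : Fin n, Inf1 n i f * Inf1 n i g = Ev n (pD n i f) * Ev n (pD n i g) := by
    intro i
    rw [habs f hf i, habs g hg i]
  simp only [this]
  exact key_ineq n f g hf hg hmod
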